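/- arXiv:2603.24156 — 7 statements merged into one kernel-verified Lean document; each statement's English description precedes it below -/
import Mathlib

section
/- Let E = ℝ^d with the Euclidean inner product, let g : E → ℝ be differentiable with L-Lipschitz gradient ∇g (L > 0), let f : E → ℝ, let F : E × E → ℝ be a tangent majorant of f, let 0 < τ ≤ 1/L, and set h = f + g and H(x, x̃) = F(x, x̃) + g(x̃) + ⟨x − x̃, ∇g(x̃)⟩ + (1/(2τ))‖x − x̃‖². Let (x^(n)) be a sequence in E such that for every n, x^(n+1) is a global minimizer of z ↦ H(z, x^(n)). Then the sequence (h(x^(n))) is non-increasing; moreover, if h is bounded from below, then (h(x^(n))) converges to a real limit. -/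
/-!
The surrogate `H(·, x̃)` majorizes the objective `h = f + g`: `F` majorizes `f`, and by the
descent lemma the quadratic model `g(x̃) + ⟪x - x̃, ∇g(x̃)⟫ + ‖x - x̃‖² / (2τ)` majorizes `g`
as soon as `τ ≤ 1 / L`. Both majorants are tight at `x = x̃`, so
`h(x⁺) ≤ H(x⁺, x̃) ≤ H(x̃, x̃) = h(x̃)` along the iteration, and a non-increasing sequence
bounded from below converges.
-/

open scoped RealInnerProductSpace

structure IsTangentMajorant {E : Type*} (F : E × E → ℝ) (f : E → ℝ) : Prop where
  le : ∀ x xt, f x ≤ F (x, xt)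
  diag : ∀ x, F (x, x) = f x

section Descent

variable {E : Type*} [NormedAddCommGroup E] [InnerProductSpace ℝ E] [CompleteSpace E]

theorem HasGradientAt.hasDerivAt_comp_add_smul {g : E → ℝ} {g' a v : E} {t : ℝ}
    (h : HasGradientAt g g' (a + t • v)) :
    HasDerivAt (fun s : ℝ => g (a + s • v)) ⟪g', v⟫ t := by
  have hline : HasDerivAt (fun s : ℝ => a + s • v) v t := by
    simpa using ((hasDerivAt_id t).smul_const v).const_add a
  simpa [Function.comp_def] using
    (hasGradientAt_iff_hasFDerivAt.mp h).comp_hasDerivAt t hline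

theorem descent_lemma {g : E → ℝ} {L : ℝ} (hg : Differentiable ℝ g)
    (hlip : ∀ a b, ‖gradient g a - gradient g b‖ ≤ L * ‖a - b‖) (a b : E) :
    g b ≤ g a + ⟪b - a, gradient g a⟫ + L / 2 * ‖b - a‖ ^ 2 := by
  set v := b - a
  have hderiv (t : ℝ) :
      HasDerivAt (fun s : ℝ => g (a + s • v)) ⟪gradient g (a + t • v), v⟫ t :=
    (hg _).hasGradientAt.hasDerivAt_comp_add_smul
  have hmodel (t : ℝ) : HasDerivAt
      (fun s : ℝ => g a + s * ⟪v, gradient g a⟫ + L / 2 * ‖v‖ ^ 2 * s ^ 2)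
      (⟪v, gradient g a⟫ + L * t * ‖v‖ ^ 2) t :=
    ((((hasDerivAt_id' t).mul_const _).const_add (g a)).add
      ((hasDerivAt_pow 2 t).const_mul (L / 2 * ‖v‖ ^ 2))).congr_deriv (by norm_num; ring)
  -- Comparison on `[0, 1]` of `s ↦ g (a + s • v)` with its quadratic model, whose slopes
  -- dominate by the Lipschitz bound on the gradient.
  have hslope (t : ℝ) (ht : 0 ≤ t) :
      ⟪gradient g (a + t • v), v⟫ ≤ ⟪v, gradient g a⟫ + L * t * ‖v‖ ^ 2 := by
    have hgap := hlip (a + t • v) a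
    rw [add_sub_cancel_left, norm_smul, Real.norm_of_nonneg ht] at hgap
    have hcs := real_inner_le_norm (gradient g (a + t • v) - gradient g a) v
    rw [inner_sub_left, real_inner_comm v (gradient g a)] at hcs
    nlinarith [mul_le_mul_of_nonneg_right hgap (norm_nonneg v)]
  have hcomp := image_le_of_deriv_right_le_deriv_boundary
    (fun t _ => (hderiv t).continuousAt.continuousWithinAt)
    (fun t _ => (hderiv t).hasDerivWithinAt) (by simp)
    (fun t _ => (hmodel t).continuousAt.continuousWithinAt)
    (fun t _ => (hmodel t).hasDerivWithinAt) (fun t ht => hslope t ht.1)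
    (Set.right_mem_Icc.mpr zero_le_one)
  simpa [v, real_inner_comm] using hcomp

end Descent

section MajorizedForwardBackward

variable {E : Type*} [NormedAddCommGroup E] [InnerProductSpace ℝ E] [CompleteSpace E]
  {F : E × E → ℝ} {f g : E → ℝ} {L τ : ℝ}

noncomputable def fbSurrogate (F : E × E → ℝ) (g : E → ℝ) (τ : ℝ) (x xt : E) : ℝ :=
  F (x, xt) + g xt + ⟪x - xt, gradient g xt⟫ + 1 / (2 * τ) * ‖x - xt‖ ^ 2

theorem fbSurrogate_self (F : E × E → ℝ) (g : E → ℝ) (τ : ℝ) (x : E) :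
    fbSurrogate F g τ x x = F (x, x) + g x := by
  simp [fbSurrogate, add_comm]

theorem le_fbSurrogate (hmaj : ∀ x xt, f x ≤ F (x, xt)) (hg : Differentiable ℝ g)
    (hlip : ∀ a b, ‖gradient g a - gradient g b‖ ≤ L * ‖a - b‖) (hL : 0 < L)
    (hτ0 : 0 < τ) (hτ : τ ≤ 1 / L) (x xt : E) :
    f x + g x ≤ fbSurrogate F g τ x xt := by
  have hstep : L / 2 ≤ 1 / (2 * τ) := by
    have := (le_one_div hτ0 hL).mp hτ
    calc L / 2 ≤ 1 / τ / 2 := by linarith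
      _ = 1 / (2 * τ) := by ring
  have hquad := mul_le_mul_of_nonneg_right hstep (sq_nonneg ‖x - xt‖)
  unfold fbSurrogate
  linarith [descent_lemma hg hlip xt x, hmaj x xt]

theorem objective_le_of_fbSurrogate_le (hF : IsTangentMajorant F f) (hg : Differentiable ℝ g)
    (hlip : ∀ a b, ‖gradient g a - gradient g b‖ ≤ L * ‖a - b‖) (hL : 0 < L)
    (hτ0 : 0 < τ) (hτ : τ ≤ 1 / L) {x xt : E}
    (hmin : fbSurrogate F g τ x xt ≤ fbSurrogate F g τ xt xt) :
    f x + g x ≤ f xt + g xt :=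
  calc f x + g x ≤ fbSurrogate F g τ x xt := le_fbSurrogate hF.le hg hlip hL hτ0 hτ x xt
    _ ≤ fbSurrogate F g τ xt xt := hmin
    _ = f xt + g xt := by rw [fbSurrogate_self, hF.diag]

end MajorizedForwardBackward

/-- Majorized forward-backward iterations: the objective values `h (x n)` form a
non-increasing sequence, and converge to a real limit whenever `h = f + g` is
bounded from below. -/
theorem majorized_fb_monotone_and_convergent {d : ℕ}
    (g f : EuclideanSpace ℝ (Fin d) → ℝ)
    (F : EuclideanSpace ℝ (Fin d) × EuclideanSpace ℝ (Fin d) → ℝ)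
    (L τ : ℝ) (hL : 0 < L)
    (hg : Differentiable ℝ g)
    (hlip : ∀ a b : EuclideanSpace ℝ (Fin d),
      ‖gradient g a - gradient g b‖ ≤ L * ‖a - b‖)
    (hmaj : ∀ x xt : EuclideanSpace ℝ (Fin d), f x ≤ F (x, xt))
    (hdiag : ∀ x : EuclideanSpace ℝ (Fin d), F (x, x) = f x)
    (hτ0 : 0 < τ) (hτ : τ ≤ 1 / L)
    (x : ℕ → EuclideanSpace ℝ (Fin d))
    (hiter : ∀ n : ℕ, ∀ z : EuclideanSpace ℝ (Fin d),
      F (x (n + 1), x n) + g (x n) + ⟪x (n + 1) - x n, gradient g (x n)⟫ +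
          (1 / (2 * τ)) * ‖x (n + 1) - x n‖ ^ 2
        ≤ F (z, x n) + g (x n) + ⟪z - x n, gradient g (x n)⟫ +
          (1 / (2 * τ)) * ‖z - x n‖ ^ 2) :
    (Antitone fun n : ℕ => f (x n) + g (x n)) ∧
    ((∃ m : ℝ, ∀ z : EuclideanSpace ℝ (Fin d), m ≤ f z + g z) →
      ∃ l : ℝ, Filter.Tendsto (fun n : ℕ => f (x n) + g (x n)) Filter.atTop (nhds l)) := by
  have hF : IsTangentMajorant F f := ⟨hmaj, hdiag⟩
  have hanti : Antitone fun n => f (x n) + g (x n) := antitone_nat_of_succ_le fun n =>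
    objective_le_of_fbSurrogate_le hF hg hlip hL hτ0 hτ (hiter n (x n))
  exact ⟨hanti, fun ⟨m, hm⟩ =>
    ⟨_, tendsto_atTop_ciInf hanti ⟨m, Set.forall_mem_range.2 fun n => hm (x n)⟩⟩⟩
end

section
/- Let E = ℝ^d with the Euclidean inner product, let g : E → ℝ be differentiable with L-Lipschitz gradient ∇g (L > 0), let f : E → ℝ, let F : E × E → ℝ be a tangent majorant of f, let 0 < τ < 1/L, and set h = f + g and H(x, x̃) = F(x, x̃) + g(x̃) + ⟨x − x̃, ∇g(x̃)⟩ + (1/(2τ))‖x − x̃‖². Then for every x̃ ∈ E and every global minimizer x' of z ↦ H(z, x̃), one has the sufficient decrease inequality h(x') ≤ h(x̃) − (1/(2τ) − L/2)·‖x' − x̃‖². -/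
open scoped RealInnerProductSpace

/-!
The Lipschitz bound on `∇g` gives the descent lemma
`g (x + v) ≤ g x + ⟪v, ∇g x⟫ + (L/2) ‖v‖²`, i.e. the linearisation of `g` at `x̃` plus `(L/2)‖·‖²`
majorises `g`. Comparing `H (x', x̃)` with `H (x̃, x̃) = h x̃` (minimality of `x'`) and bounding
`f x' ≤ F (x', x̃)` and `g x'` by the descent lemma then gives the decrease by a sum of three
inequalities.
-/

section DescentLemma

variable {E : Type*} [NormedAddCommGroup E] [InnerProductSpace ℝ E] [CompleteSpace E]

theorem hasDerivAt_comp_add_smul_of_differentiableAt {g : E → ℝ} {x v : E} {t : ℝ}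
    (hg : DifferentiableAt ℝ g (x + t • v)) :
    HasDerivAt (fun s : ℝ => g (x + s • v)) ⟪gradient g (x + t • v), v⟫ t := by
  have hline : HasDerivAt (fun s : ℝ => x + s • v) v t := by
    simpa using ((hasDerivAt_id t).smul_const v).const_add x
  exact hg.hasGradientAt.hasFDerivAt.comp_hasDerivAt t hline

theorem inner_gradient_add_smul_sub_le {g : E → ℝ} {L : ℝ}
    (hlip : ∀ a b : E, ‖gradient g a - gradient g b‖ ≤ L * ‖a - b‖)
    (x v : E) {t : ℝ} (ht : 0 ≤ t) :
    ⟪gradient g (x + t • v), v⟫ ≤ ⟪gradient g x, v⟫ + L * t * ‖v‖ ^ 2 := by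
  have hincr : ⟪gradient g (x + t • v) - gradient g x, v⟫ ≤ L * t * ‖v‖ ^ 2 :=
    calc ⟪gradient g (x + t • v) - gradient g x, v⟫
        ≤ ‖gradient g (x + t • v) - gradient g x‖ * ‖v‖ := real_inner_le_norm _ _
      _ ≤ L * ‖x + t • v - x‖ * ‖v‖ := by gcongr; exact hlip _ _
      _ = L * t * ‖v‖ ^ 2 := by
        rw [add_sub_cancel_left, norm_smul, Real.norm_of_nonneg ht]; ring
  rw [inner_sub_left] at hincr
  linarith

theorem le_add_inner_gradient_add_sq_of_lipschitz_gradient {g : E → ℝ} {L : ℝ}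
    (hg : Differentiable ℝ g)
    (hlip : ∀ a b : E, ‖gradient g a - gradient g b‖ ≤ L * ‖a - b‖) (x v : E) :
    g (x + v) ≤ g x + ⟪v, gradient g x⟫ + L / 2 * ‖v‖ ^ 2 := by
  set quadratic : ℝ → ℝ := fun t => g x + t * ⟪gradient g x, v⟫ + L / 2 * t ^ 2 * ‖v‖ ^ 2
  have hderiv (t : ℝ) :
      HasDerivAt (fun s : ℝ => g (x + s • v)) ⟪gradient g (x + t • v), v⟫ t :=
    hasDerivAt_comp_add_smul_of_differentiableAt (hg _)
  have hquadratic (t : ℝ) :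
      HasDerivAt quadratic (⟪gradient g x, v⟫ + L * t * ‖v‖ ^ 2) t := by
    refine ((((hasDerivAt_id t).mul_const _).const_add (g x)).add
      (((hasDerivAt_pow 2 t).const_mul (L / 2)).mul_const (‖v‖ ^ 2))).congr_deriv ?_
    simp only [Nat.cast_ofNat]
    ring
  have hcomparison := image_le_of_deriv_right_le_deriv_boundary (a := 0) (b := 1)
    (fun t _ => (hderiv t).continuousAt.continuousWithinAt)
    (fun t _ => (hderiv t).hasDerivWithinAt) (by simp [quadratic])
    (fun t _ => (hquadratic t).continuousAt.continuousWithinAt)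
    (fun t _ => (hquadratic t).hasDerivWithinAt)
    (fun t ht => inner_gradient_add_smul_sub_le hlip x v ht.1)
    (Set.right_mem_Icc.2 zero_le_one)
  simpa [quadratic, real_inner_comm] using hcomparison

end DescentLemma

theorem majorized_fb_sufficient_decrease_general {d : ℕ}
    (g f : EuclideanSpace ℝ (Fin d) → ℝ)
    (F : EuclideanSpace ℝ (Fin d) × EuclideanSpace ℝ (Fin d) → ℝ)
    (L τ : ℝ)
    (hg : Differentiable ℝ g)
    (hlip : ∀ a b : EuclideanSpace ℝ (Fin d),
      ‖gradient g a - gradient g b‖ ≤ L * ‖a - b‖)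
    (hmaj : ∀ x xt : EuclideanSpace ℝ (Fin d), f x ≤ F (x, xt))
    (hdiag : ∀ x : EuclideanSpace ℝ (Fin d), F (x, x) = f x)
    (xt x' : EuclideanSpace ℝ (Fin d))
    (hmin : ∀ z : EuclideanSpace ℝ (Fin d),
      F (x', xt) + g xt + ⟪x' - xt, gradient g xt⟫ + (1 / (2 * τ)) * ‖x' - xt‖ ^ 2
        ≤ F (z, xt) + g xt + ⟪z - xt, gradient g xt⟫ + (1 / (2 * τ)) * ‖z - xt‖ ^ 2) :
    f x' + g x' ≤ f xt + g xt - (1 / (2 * τ) - L / 2) * ‖x' - xt‖ ^ 2 := by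
  have hcompare_center := hmin xt
  rw [hdiag, sub_self, inner_zero_left, norm_zero, zero_pow two_ne_zero, mul_zero, add_zero,
    add_zero] at hcompare_center
  have hdescent := le_add_inner_gradient_add_sq_of_lipschitz_gradient hg hlip xt (x' - xt)
  rw [add_sub_cancel] at hdescent
  have hmajorant := hmaj x' xt
  linarith

/-- Sufficient decrease: any global minimizer `x'` of `z ↦ H (z, xt)` satisfies
`h x' ≤ h xt - (1/(2τ) - L/2) ‖x' - xt‖²`. -/
theorem majorized_fb_sufficient_decrease {d : ℕ}
    (g f : EuclideanSpace ℝ (Fin d) → ℝ)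
    (F : EuclideanSpace ℝ (Fin d) × EuclideanSpace ℝ (Fin d) → ℝ)
    (L τ : ℝ) (hL : 0 < L)
    (hg : Differentiable ℝ g)
    (hlip : ∀ a b : EuclideanSpace ℝ (Fin d),
      ‖gradient g a - gradient g b‖ ≤ L * ‖a - b‖)
    (hmaj : ∀ x xt : EuclideanSpace ℝ (Fin d), f x ≤ F (x, xt))
    (hdiag : ∀ x : EuclideanSpace ℝ (Fin d), F (x, x) = f x)
    (hτ0 : 0 < τ) (hτ : τ < 1 / L)
    (xt x' : EuclideanSpace ℝ (Fin d))
    (hmin : ∀ z : EuclideanSpace ℝ (Fin d),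
      F (x', xt) + g xt + ⟪x' - xt, gradient g xt⟫ + (1 / (2 * τ)) * ‖x' - xt‖ ^ 2
        ≤ F (z, xt) + g xt + ⟪z - xt, gradient g xt⟫ + (1 / (2 * τ)) * ‖z - xt‖ ^ 2) :
    f x' + g x' ≤ f xt + g xt - (1 / (2 * τ) - L / 2) * ‖x' - xt‖ ^ 2 :=
  majorized_fb_sufficient_decrease_general g f F L τ hg hlip hmaj hdiag xt x' hmin
end

section
/- Let E = ℝ^d with the Euclidean inner product, let g : E → ℝ be differentiable with L-Lipschitz gradient ∇g (L > 0), let f : E → ℝ, let F : E × E → ℝ be a tangent majorant of f, let 0 < τ < 1/L, set h = f + g, and assume h(x) ≥ h* for all x ∈ E for some h* ∈ ℝ. Let (x^(n)) be a sequence in E such that for every n, x^(n+1) is a global minimizer of z ↦ F(z, x^(n)) + g(x^(n)) + ⟨z − x^(n), ∇g(x^(n))⟩ + (1/(2τ))‖z − x^(n)‖². Then for every N ≥ 1, the partial sum satisfies Σ_{n=0}^{N−1} ‖x^(n+1) − x^(n)‖² ≤ (h(x^(0)) − h*) / (1/(2τ) − L/2). -/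
/-!
Testing the minimality of `x (n + 1)` against `z = x n`, and bounding `f` by its tangent majorant
and `g` by the descent lemma `g y ≤ g x + ⟪∇g x, y - x⟫ + L/2 ‖y - x‖²`, gives the sufficient
decrease `h (x (n + 1)) + (1/(2τ) - L/2) ‖x (n + 1) - x n‖² ≤ h (x n)`, where `h = f + g`.
Summing telescopes to `h (x 0) - h (x N) ≤ h (x 0) - h*`.
-/

open scoped RealInnerProductSpace NNReal

theorem sum_range_le_sub_of_add_le {α : Type*} [AddCommGroup α] [PartialOrder α]
    [IsOrderedAddMonoid α] {u a : ℕ → α} (h : ∀ n, u (n + 1) + a n ≤ u n) (N : ℕ) :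
    ∑ n ∈ Finset.range N, a n ≤ u 0 - u N := by
  rw [← Finset.sum_range_sub']
  exact Finset.sum_le_sum fun n _ => le_sub_iff_add_le'.2 (h n)

section Smooth

variable {E : Type*} [NormedAddCommGroup E] [InnerProductSpace ℝ E] [CompleteSpace E]
  {g : E → ℝ}

theorem DifferentiableAt.hasDerivAt_add_smul {x v : E} {t : ℝ}
    (hg : DifferentiableAt ℝ g (x + t • v)) :
    HasDerivAt (fun s : ℝ => g (x + s • v)) ⟪gradient g (x + t • v), v⟫ t := by
  have hline : HasDerivAt (fun s : ℝ => x + s • v) v t := by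
    simpa using ((hasDerivAt_id t).smul_const v).const_add x
  rw [inner_gradient_left]
  exact hg.hasFDerivAt.comp_hasDerivAt t hline

theorem LipschitzWith.inner_gradient_add_smul_le {K : ℝ≥0} (hK : LipschitzWith K (gradient g))
    (x v : E) {t : ℝ} (ht : 0 ≤ t) :
    ⟪gradient g (x + t • v), v⟫ ≤ ⟪gradient g x, v⟫ + K * t * ‖v‖ ^ 2 := by
  have hdist : ‖gradient g (x + t • v) - gradient g x‖ ≤ K * (t * ‖v‖) := by
    simpa [dist_eq_norm, norm_smul, abs_of_nonneg ht] using hK.dist_le_mul (x + t • v) x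
  calc ⟪gradient g (x + t • v), v⟫
      = ⟪gradient g x, v⟫ + ⟪gradient g (x + t • v) - gradient g x, v⟫ := by
        rw [inner_sub_left]; ring
    _ ≤ ⟪gradient g x, v⟫ + K * (t * ‖v‖) * ‖v‖ := by
        gcongr
        exact (real_inner_le_norm _ _).trans (by gcongr)
    _ = ⟪gradient g x, v⟫ + K * t * ‖v‖ ^ 2 := by ring

theorem Differentiable.le_add_inner_gradient_add_sq {K : ℝ≥0} (hg : Differentiable ℝ g)
    (hK : LipschitzWith K (gradient g)) (x y : E) :
    g y ≤ g x + ⟪gradient g x, y - x⟫ + K / 2 * ‖y - x‖ ^ 2 := by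
  set v := y - x
  have hline (t : ℝ) := (hg (x + t • v)).hasDerivAt_add_smul
  have hquad (t : ℝ) :
      HasDerivAt (fun t : ℝ => g x + t * ⟪gradient g x, v⟫ + K / 2 * t ^ 2 * ‖v‖ ^ 2)
        (⟪gradient g x, v⟫ + K * t * ‖v‖ ^ 2) t := by
    refine ((((hasDerivAt_id' t).mul_const ⟪gradient g x, v⟫).const_add (g x)).add
      (((hasDerivAt_pow 2 t).const_mul ((K : ℝ) / 2)).mul_const (‖v‖ ^ 2))).congr_deriv ?_
    push_cast; ring
  have hcompare := image_le_of_deriv_right_le_deriv_boundary (a := 0) (b := 1)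
    (fun t _ => (hline t).continuousAt.continuousWithinAt) (fun t _ => (hline t).hasDerivWithinAt)
    (by simp) (fun t _ => (hquad t).continuousAt.continuousWithinAt)
    (fun t _ => (hquad t).hasDerivWithinAt)
    (fun t ht => hK.inner_gradient_add_smul_le x v ht.1) (Set.right_mem_Icc.2 zero_le_one)
  simpa [v] using hcompare

end Smooth

def IsTangentMajorant_s4 {E : Type*} (F : E × E → ℝ) (f : E → ℝ) : Prop :=
  (∀ x xt, f x ≤ F (x, xt)) ∧ ∀ x, F (x, x) = f x

section ForwardBackward

variable {E : Type*} [NormedAddCommGroup E] [InnerProductSpace ℝ E] [CompleteSpace E]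

/-- The model minimized by one majorized forward-backward step from `x`, evaluated at `z`. -/
noncomputable def fbModel (F : E × E → ℝ) (g : E → ℝ) (τ : ℝ) (x z : E) : ℝ :=
  F (z, x) + g x + ⟪z - x, gradient g x⟫ + 1 / (2 * τ) * ‖z - x‖ ^ 2

theorem fbModel_sufficient_decrease {f g : E → ℝ} {F : E × E → ℝ} {K : ℝ≥0} {τ : ℝ} {x x' : E}
    (hF : IsTangentMajorant_s4 F f) (hg : Differentiable ℝ g) (hK : LipschitzWith K (gradient g))
    (hmin : fbModel F g τ x x' ≤ fbModel F g τ x x) :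
    f x' + g x' + (1 / (2 * τ) - K / 2) * ‖x' - x‖ ^ 2 ≤ f x + g x := by
  have hdescent := hg.le_add_inner_gradient_add_sq hK x x'
  have hmaj := hF.1 x' x
  simp only [fbModel, sub_self, inner_zero_left, norm_zero, hF.2] at hmin
  rw [real_inner_comm] at hdescent
  linarith

end ForwardBackward

/-- Summed sufficient decrease: the partial sums of squared successive differences
of the majorized forward-backward iterates are bounded by
`(h (x 0) - h*) / (1/(2τ) - L/2)`. -/
theorem majorized_fb_sum_sq_bound {d : ℕ}
    (g f : EuclideanSpace ℝ (Fin d) → ℝ)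
    (F : EuclideanSpace ℝ (Fin d) × EuclideanSpace ℝ (Fin d) → ℝ)
    (L τ : ℝ) (hL : 0 < L)
    (hg : Differentiable ℝ g)
    (hlip : ∀ a b : EuclideanSpace ℝ (Fin d),
      ‖gradient g a - gradient g b‖ ≤ L * ‖a - b‖)
    (hmaj : ∀ x xt : EuclideanSpace ℝ (Fin d), f x ≤ F (x, xt))
    (hdiag : ∀ x : EuclideanSpace ℝ (Fin d), F (x, x) = f x)
    (hτ0 : 0 < τ) (hτ : τ < 1 / L)
    (hstar : ℝ) (hbound : ∀ z : EuclideanSpace ℝ (Fin d), hstar ≤ f z + g z)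
    (x : ℕ → EuclideanSpace ℝ (Fin d))
    (hiter : ∀ n : ℕ, ∀ z : EuclideanSpace ℝ (Fin d),
      F (x (n + 1), x n) + g (x n) + ⟪x (n + 1) - x n, gradient g (x n)⟫ +
          (1 / (2 * τ)) * ‖x (n + 1) - x n‖ ^ 2
        ≤ F (z, x n) + g (x n) + ⟪z - x n, gradient g (x n)⟫ +
          (1 / (2 * τ)) * ‖z - x n‖ ^ 2) :
    ∀ N : ℕ, 1 ≤ N →
      ∑ n ∈ Finset.range N, ‖x (n + 1) - x n‖ ^ 2
        ≤ (f (x 0) + g (x 0) - hstar) / (1 / (2 * τ) - L / 2) := by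
  intro N _
  have hK : LipschitzWith ⟨L, hL.le⟩ (gradient g) :=
    .of_dist_le_mul fun a b => by rw [dist_eq_norm, dist_eq_norm]; exact hlip a b
  have hc : 0 < 1 / (2 * τ) - L / 2 := by
    have : τ * L < 1 := (lt_div_iff₀ hL).1 hτ
    rw [sub_pos, lt_div_iff₀ (by positivity)]
    linarith
  have hdecrease (n : ℕ) :=
    fbModel_sufficient_decrease ⟨hmaj, hdiag⟩ hg hK (hiter n (x n))
  rw [le_div_iff₀ hc, mul_comm, Finset.mul_sum]
  calc ∑ n ∈ Finset.range N, (1 / (2 * τ) - L / 2) * ‖x (n + 1) - x n‖ ^ 2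
      ≤ f (x 0) + g (x 0) - (f (x N) + g (x N)) :=
        sum_range_le_sub_of_add_le (u := fun n => f (x n) + g (x n)) hdecrease N
    _ ≤ f (x 0) + g (x 0) - hstar := by linarith [hbound (x N)]
end

section
/- Let A be an m × n real matrix with A_{ij} ≥ 0 for all i, j, and let y ∈ ℝ^m with y_i ≥ 0 for all i. Let x, x̃ ∈ ℝ^n satisfy x_j > 0 and x̃_j > 0 for all j, and suppose (Ax)_i > 0 and (Ax̃)_i > 0 for all i. Set α̃_{ij} = A_{ij} x̃_j / (Ax̃)_i. Then the EM surrogate majorizes the Poisson negative log-likelihood: f(x) ≤ F_EM(x, x̃), where f(x) = Σ_{i=1}^m [(Ax)_i − y_i · log((Ax)_i)] and F_EM(x, x̃) = Σ_{i=1}^m [(Ax)_i − Σ_{j=1}^n y_i · α̃_{ij} · log(A_{ij} x_j / α̃_{ij})]. -/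
open scoped BigOperators

/-- The Poisson negative log-likelihood `f x = Σ_i [(Ax)_i − y_i log (Ax)_i]`
(with the convention `log 0 = 0`). -/
noncomputable def poissonNLL {m n : ℕ} (A : Matrix (Fin m) (Fin n) ℝ)
    (y : Fin m → ℝ) (x : Fin n → ℝ) : ℝ :=
  ∑ i, (A.mulVec x i - y i * Real.log (A.mulVec x i))

/-- The EM surrogate
`F_EM (x, xt) = Σ_i [(Ax)_i − Σ_j y_i α̃_ij log (A_ij x_j / α̃_ij)]` with
`α̃_ij = A_ij xt_j / (A xt)_i` (conventions `log 0 = 0`, division by zero is zero). -/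
noncomputable def emSurrogate {m n : ℕ} (A : Matrix (Fin m) (Fin n) ℝ)
    (y : Fin m → ℝ) (x xt : Fin n → ℝ) : ℝ :=
  ∑ i, (A.mulVec x i -
    ∑ j, y i * (A i j * xt j / A.mulVec xt i) *
      Real.log (A i j * x j / (A i j * xt j / A.mulVec xt i)))

/-! Row by row this is Jensen's inequality for the concave logarithm with the weights `α̃_ij`,
which sum to one: `Σ_j α̃_ij log (A_ij x_j / α̃_ij) ≤ log (Σ_j A_ij x_j) = log (Ax)_i`.
It follows termwise from `log t ≤ t - 1` at `t = A_ij x_j / (α̃_ij (Ax)_i)`, since the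
right-hand sides `A_ij x_j / (Ax)_i - α̃_ij` sum to zero. Multiplying by `y_i ≥ 0` and
summing over `i` gives the claim. -/

open Finset Real

theorem mul_log_div_le {w b S : ℝ} (hw : 0 ≤ w) (hb : 0 ≤ b) (hwb : 0 < w → 0 < b)
    (hS : 0 < S) : w * log (b / w) ≤ w * log S + b / S - w := by
  rcases hw.eq_or_lt with rfl | hw
  · simpa using div_nonneg hb hS.le
  have hbw : 0 < b / w := div_pos (hwb hw) hw
  have hlog : log (b / w) - log S ≤ b / w / S - 1 := by
    rw [← log_div hbw.ne' hS.ne']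
    exact log_le_sub_one_of_pos (div_pos hbw hS)
  calc w * log (b / w) = w * log S + w * (log (b / w) - log S) := by ring
    _ ≤ w * log S + w * (b / w / S - 1) := by gcongr
    _ = w * log S + b / S - w := by field_simp; ring

theorem sum_mul_log_div_le_log_sum {ι : Type*} [Fintype ι] {w b : ι → ℝ}
    (hw : ∀ j, 0 ≤ w j) (hw_sum : ∑ j, w j = 1) (hb : ∀ j, 0 ≤ b j)
    (hwb : ∀ j, 0 < w j → 0 < b j) :
    ∑ j, w j * log (b j / w j) ≤ log (∑ j, b j) := by
  obtain ⟨k, -, hk⟩ : ∃ k ∈ univ, (0 : ℝ) < w k :=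
    exists_lt_of_sum_lt (f := fun _ => 0) (by simp [hw_sum])
  have hS : 0 < ∑ j, b j :=
    (hwb k hk).trans_le (single_le_sum (fun j _ => hb j) (mem_univ k))
  calc ∑ j, w j * log (b j / w j)
      ≤ ∑ j, (w j * log (∑ j, b j) + b j / ∑ j, b j - w j) :=
        sum_le_sum fun j _ => mul_log_div_le (hw j) (hb j) (hwb j) hS
    _ = log (∑ j, b j) := by
        rw [sum_sub_distrib, sum_add_distrib, ← sum_mul, ← sum_div, hw_sum, div_self hS.ne']
        ring

theorem poissonNLL_le_emSurrogate_general {m n : ℕ} (A : Matrix (Fin m) (Fin n) ℝ)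
    (y : Fin m → ℝ) (hA : ∀ i j, 0 ≤ A i j) (hy : ∀ i, 0 ≤ y i)
    (x xt : Fin n → ℝ) (hx : ∀ j, 0 < x j) (hxt : ∀ j, 0 < xt j)
    (hAxt : ∀ i, 0 < A.mulVec xt i) :
    poissonNLL A y x ≤ emSurrogate A y x xt := by
  refine sum_le_sum fun i _ => sub_le_sub_left ?_ _
  have hjensen : ∑ j, A i j * xt j / A.mulVec xt i *
      log (A i j * x j / (A i j * xt j / A.mulVec xt i)) ≤ log (A.mulVec x i) := by
    refine sum_mul_log_div_le_log_sum
      (fun j => div_nonneg (mul_nonneg (hA i j) (hxt j).le) (hAxt i).le) ?_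
      (fun j => mul_nonneg (hA i j) (hx j).le) fun j hj => ?_
    · rw [← sum_div]
      exact div_self (hAxt i).ne'
    · have hAij : 0 < A i j := (hA i j).lt_of_ne fun h => by simp [← h] at hj
      exact mul_pos hAij (hx j)
  calc ∑ j, y i * (A i j * xt j / A.mulVec xt i) *
        log (A i j * x j / (A i j * xt j / A.mulVec xt i))
      = y i * ∑ j, A i j * xt j / A.mulVec xt i *
        log (A i j * x j / (A i j * xt j / A.mulVec xt i)) := by
        simp only [mul_sum, mul_assoc]
    _ ≤ y i * log (A.mulVec x i) := mul_le_mul_of_nonneg_left hjensen (hy i)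

/-- The EM surrogate majorizes the Poisson negative log-likelihood:
`f x ≤ F_EM (x, xt)`. -/
theorem poissonNLL_le_emSurrogate {m n : ℕ} (A : Matrix (Fin m) (Fin n) ℝ)
    (y : Fin m → ℝ) (hA : ∀ i j, 0 ≤ A i j) (hy : ∀ i, 0 ≤ y i)
    (x xt : Fin n → ℝ) (hx : ∀ j, 0 < x j) (hxt : ∀ j, 0 < xt j)
    (hAx : ∀ i, 0 < A.mulVec x i) (hAxt : ∀ i, 0 < A.mulVec xt i) :
    poissonNLL A y x ≤ emSurrogate A y x xt :=
  poissonNLL_le_emSurrogate_general A y hA hy x xt hx hxt hAxt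
end

section
/- Let A be an m × n real matrix with A_{ij} ≥ 0 for all i, j, let y ∈ ℝ^m with y_i ≥ 0 for all i, and let x̃ ∈ ℝ^n with x̃_j > 0 for all j and (Ax̃)_i > 0 for all i. Define the sensitivity s_j = Σ_{i=1}^m A_{ij} and assume s_j > 0 for all j; set α̃_{ij} = A_{ij} x̃_j / (Ax̃)_i and assume that for each j there exists i with y_i A_{ij} > 0. Define the multiplicative (Richardson–Lucy/MLEM) update x* by x*_j = (x̃_j / s_j) · Σ_{i=1}^m y_i A_{ij} / (Ax̃)_i. Then x*_j > 0 for all j, and x* is a global minimizer of x ↦ F_EM(x, x̃) over the open positive orthant: for every x ∈ ℝ^n with x_j > 0 for all j, F_EM(x*, x̃) ≤ F_EM(x, x̃), where F_EM(x, x̃) = Σ_{i=1}^m [(Ax)_i − Σ_{j=1}^n y_i · α̃_{ij} · log(A_{ij} x_j / α̃_{ij})]. -/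
open scoped BigOperators

/-!
Splitting `log (A_ij x_j / α̃_ij) = log x_j + log (A_ij / α̃_ij)` makes the surrogate separable:
up to a constant it is `Σ_j (s_j x_j - b_j log x_j)` with `b_j = Σ_i y_i α̃_ij`. By
`log t ≤ t - 1`, each summand is minimized over `x_j > 0` at `b_j / s_j`, which is exactly the
MLEM update.
-/

lemma mul_sub_mul_log_div_le {s b t : ℝ} (hs : 0 < s) (hb : 0 < b) (ht : 0 < t) :
    s * (b / s) - b * Real.log (b / s) ≤ s * t - b * Real.log t := by
  have hlog : Real.log (s * t / b) = Real.log t - Real.log (b / s) := by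
    rw [Real.log_div (by positivity) hb.ne', Real.log_mul hs.ne' ht.ne',
      Real.log_div hb.ne' hs.ne']
    ring
  have key : b * Real.log (s * t / b) ≤ s * t - b :=
    calc b * Real.log (s * t / b) ≤ b * (s * t / b - 1) :=
          mul_le_mul_of_nonneg_left (Real.log_le_sub_one_of_pos (by positivity)) hb.le
      _ = s * t - b := by field_simp
  rw [hlog] at key
  rw [mul_div_cancel₀ b hs.ne']
  linarith

lemma Matrix.sum_mulVec_apply {R ι κ : Type*} [NonUnitalNonAssocSemiring R] [Fintype ι]
    [Fintype κ] (A : Matrix ι κ R) (x : κ → R) :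
    ∑ i, A.mulVec x i = ∑ j, (∑ i, A i j) * x j := by
  simp only [Matrix.mulVec, dotProduct, Finset.sum_mul]
  exact Finset.sum_comm

section EMWeight

variable {m n : ℕ} (A : Matrix (Fin m) (Fin n) ℝ) (y : Fin m → ℝ) (xt : Fin n → ℝ)

/-- The weight `α̃_ij` of the EM surrogate. -/
noncomputable def emWeight (i : Fin m) (j : Fin n) : ℝ :=
  A i j * xt j / A.mulVec xt i

lemma emWeight_pos {i : Fin m} {j : Fin n} (hA : 0 < A i j) (hxt : 0 < xt j)
    (hAxt : 0 < A.mulVec xt i) : 0 < emWeight A xt i j :=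
  div_pos (mul_pos hA hxt) hAxt

lemma emWeight_nonneg {i : Fin m} {j : Fin n} (hA : 0 ≤ A i j) (hxt : 0 ≤ xt j)
    (hAxt : 0 ≤ A.mulVec xt i) : 0 ≤ emWeight A xt i j :=
  div_nonneg (mul_nonneg hA hxt) hAxt

lemma sum_mul_emWeight_pos (hA : ∀ i j, 0 ≤ A i j) (hy : ∀ i, 0 ≤ y i)
    (hxt : ∀ j, 0 < xt j) (hAxt : ∀ i, 0 < A.mulVec xt i) {j : Fin n}
    (hyA : ∃ i, 0 < y i * A i j) : 0 < ∑ i, y i * emWeight A xt i j := by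
  obtain ⟨i, hi⟩ := hyA
  refine Finset.sum_pos' (fun k _ => ?_) ⟨i, Finset.mem_univ i, ?_⟩
  · exact mul_nonneg (hy k) (emWeight_nonneg A xt (hA k j) (hxt j).le (hAxt k).le)
  · have hAij : 0 < A i j := pos_of_mul_pos_right hi (hy i)
    exact mul_pos (pos_of_mul_pos_left hi hAij.le) (emWeight_pos A xt hAij (hxt j) (hAxt i))

lemma mlem_update_eq_sum_mul_emWeight_div (j : Fin n) :
    xt j / (∑ i, A i j) * ∑ i, y i * A i j / A.mulVec xt i =
      (∑ i, y i * emWeight A xt i j) / ∑ i, A i j := by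
  rw [div_mul_eq_mul_div, Finset.mul_sum]
  congr 1
  exact Finset.sum_congr rfl fun i _ => by unfold emWeight; ring

lemma mul_emWeight_mul_log_mul_div_emWeight {x : ℝ} (hx : x ≠ 0) (i : Fin m) (j : Fin n) :
    y i * emWeight A xt i j * Real.log (A i j * x / emWeight A xt i j) =
      y i * emWeight A xt i j * Real.log x +
        y i * emWeight A xt i j * Real.log (A i j / emWeight A xt i j) := by
  by_cases hα : emWeight A xt i j = 0
  · simp [hα]
  have hAij : A i j ≠ 0 := fun h => hα (by simp [emWeight, h])
  rw [mul_div_right_comm, Real.log_mul (div_ne_zero hAij hα) hx]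
  ring

theorem emSurrogate_eq_sum_sub_const (x : Fin n → ℝ) (hx : ∀ j, x j ≠ 0) :
    emSurrogate A y x xt =
      ∑ j, ((∑ i, A i j) * x j - (∑ i, y i * emWeight A xt i j) * Real.log (x j)) -
        ∑ i, ∑ j, y i * emWeight A xt i j * Real.log (A i j / emWeight A xt i j) := by
  change ∑ i, (A.mulVec x i - ∑ j, y i * emWeight A xt i j *
    Real.log (A i j * x j / emWeight A xt i j)) = _
  simp only [mul_emWeight_mul_log_mul_div_emWeight A y xt (hx _), Finset.sum_sub_distrib,
    Finset.sum_add_distrib, Matrix.sum_mulVec_apply, Finset.sum_mul]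
  rw [Finset.sum_comm (f := fun i j => y i * emWeight A xt i j * Real.log (x j))]
  ring

end EMWeight

/-- The multiplicative Richardson–Lucy/MLEM update
`x*_j = (xt_j / s_j) Σ_i y_i A_ij / (A xt)_i` has strictly positive entries and
globally minimizes `x ↦ F_EM (x, xt)` over the open positive orthant. -/
theorem mlem_update_minimizes_emSurrogate {m n : ℕ} (A : Matrix (Fin m) (Fin n) ℝ)
    (y : Fin m → ℝ) (hA : ∀ i j, 0 ≤ A i j) (hy : ∀ i, 0 ≤ y i)
    (xt : Fin n → ℝ) (hxt : ∀ j, 0 < xt j) (hAxt : ∀ i, 0 < A.mulVec xt i)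
    (hs : ∀ j, 0 < ∑ i, A i j)
    (hyA : ∀ j, ∃ i, 0 < y i * A i j)
    (xstar : Fin n → ℝ)
    (hxstar : ∀ j, xstar j = xt j / (∑ i, A i j) * ∑ i, y i * A i j / A.mulVec xt i) :
    (∀ j, 0 < xstar j) ∧
    (∀ x : Fin n → ℝ, (∀ j, 0 < x j) →
      emSurrogate A y xstar xt ≤ emSurrogate A y x xt) := by
  have hb : ∀ j, 0 < ∑ i, y i * emWeight A xt i j := fun j =>
    sum_mul_emWeight_pos A y xt hA hy hxt hAxt (hyA j)
  have hxstar' : ∀ j, xstar j = (∑ i, y i * emWeight A xt i j) / ∑ i, A i j := fun j =>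
    (hxstar j).trans (mlem_update_eq_sum_mul_emWeight_div A y xt j)
  have hxstar_pos : ∀ j, 0 < xstar j := fun j => hxstar' j ▸ div_pos (hb j) (hs j)
  refine ⟨hxstar_pos, fun x hx => ?_⟩
  rw [emSurrogate_eq_sum_sub_const A y xt x fun j => (hx j).ne',
    emSurrogate_eq_sum_sub_const A y xt xstar fun j => (hxstar_pos j).ne']
  refine sub_le_sub_right (Finset.sum_le_sum fun j _ => ?_) _
  rw [hxstar' j]
  exact mul_sub_mul_log_div_le (hs j) (hb j) (hx j)
end

section
/- Let A be an m × n real matrix with A_{ij} ≥ 0 for all i, j, such that every row of A has a strictly positive entry, let y ∈ ℝ^m with y_i ≥ 0 for all i, and let x̃ ∈ ℝ^n with x̃_j > 0 for all j and (Ax̃)_i > 0 for all i. Define s_j = Σ_{i=1}^m A_{ij}, assume s_j > 0 for all j, and assume that for each j there exists i with y_i A_{ij} > 0. Define the Richardson–Lucy/MLEM update x* by x*_j = (x̃_j / s_j) · Σ_{i=1}^m y_i A_{ij} / (Ax̃)_i. Then the Poisson negative log-likelihood does not increase: f(x*) ≤ f(x̃), where f(x) = Σ_{i=1}^m [(Ax)_i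 − y_i · log((Ax)_i)]. -/
/-!
Set `c_ij = A_ij x̃_j / (Ax̃)_i`, a probability vector in `j` for each row `i`. Since
`(Ax)_i / (Ax̃)_i = Σ_j c_ij (x_j / x̃_j)`, concavity of `log` gives, for every `x > 0`, the
minorization
`f x̃ - f x ≥ Σ_j [s_j (x̃_j - x_j) + x̃_j g_j log (x_j / x̃_j)]`, with `g_j = Σ_i y_i A_ij / (Ax̃)_i`.
The MLEM update is exactly the point where `x̃_j g_j = s_j x*_j`, and there each summand is
`s_j (x*_j log (x*_j / x̃_j) - (x*_j - x̃_j)) ≥ 0` by Gibbs' inequality `b log (b / a) ≥ b - a`.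
-/

open scoped BigOperators

open Finset Real
open scoped Matrix

namespace Real

lemma sub_le_mul_log_div {a b : ℝ} (ha : 0 < a) (hb : 0 ≤ b) : b - a ≤ b * log (b / a) := by
  have hkl := mul_nonneg ha.le (InformationTheory.klFun_nonneg (div_nonneg hb ha.le))
  have hexpand : a * InformationTheory.klFun (b / a) = b * log (b / a) + a - b := by
    rw [InformationTheory.klFun_apply]
    field_simp
  linarith

lemma sum_mul_log_le_mul_log_sum_div {ι : Type*} (s : Finset ι) {w p : ι → ℝ}
    (hw : ∀ i ∈ s, 0 ≤ w i) (hW : 0 < ∑ i ∈ s, w i) (hp : ∀ i ∈ s, 0 < p i) :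
    ∑ i ∈ s, w i * log (p i) ≤ (∑ i ∈ s, w i) * log ((∑ i ∈ s, w i * p i) / ∑ i ∈ s, w i) := by
  have hjensen := strictConcaveOn_log_Ioi.concaveOn.le_map_centerMass hw hW hp
  simp only [Finset.centerMass, smul_eq_mul, Function.comp_apply] at hjensen
  rw [inv_mul_eq_div, inv_mul_eq_div, div_le_iff₀ hW] at hjensen
  linarith

end Real

namespace Matrix

variable {ι κ : Type*} [Fintype κ]

lemma sum_mulVec_eq_sum_mul [Fintype ι] {R : Type*} [NonUnitalNonAssocSemiring R]
    (A : Matrix ι κ R) (x : κ → R) : ∑ i, (A *ᵥ x) i = ∑ j, (∑ i, A i j) * x j := by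
  simp only [mulVec, dotProduct, sum_mul]
  exact sum_comm

lemma mulVec_pos {A : Matrix ι κ ℝ} {x : κ → ℝ} {i : ι} (hA : ∀ j, 0 ≤ A i j)
    (hrow : ∃ j, 0 < A i j) (hx : ∀ j, 0 < x j) : 0 < (A *ᵥ x) i := by
  obtain ⟨j, hj⟩ := hrow
  exact sum_pos' (fun k _ => mul_nonneg (hA k) (hx k).le) ⟨j, mem_univ j, mul_pos hj (hx j)⟩

lemma sum_mul_mul_log_div_le {A : Matrix ι κ ℝ} {x xt : κ → ℝ} {i : ι} (hA : ∀ j, 0 ≤ A i j)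
    (hx : ∀ j, 0 < x j) (hxt : ∀ j, 0 < xt j) (hAxt : 0 < (A *ᵥ xt) i) :
    ∑ j, A i j * xt j * log (x j / xt j) ≤ (A *ᵥ xt) i * log ((A *ᵥ x) i / (A *ᵥ xt) i) := by
  have hratio : ∀ j, A i j * xt j * (x j / xt j) = A i j * x j := fun j => by
    field_simp [(hxt j).ne']
  simpa only [hratio, mulVec, dotProduct] using sum_mul_log_le_mul_log_sum_div univ
    (fun j _ => mul_nonneg (hA j) (hxt j).le) hAxt (fun j _ => div_pos (hx j) (hxt j))

end Matrix

lemma sum_le_poissonNLL_sub {m n : ℕ} {A : Matrix (Fin m) (Fin n) ℝ} {y : Fin m → ℝ}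
    {x xt : Fin n → ℝ} (hA : ∀ i j, 0 ≤ A i j) (hy : ∀ i, 0 ≤ y i) (hx : ∀ j, 0 < x j)
    (hAx : ∀ i, 0 < (A *ᵥ x) i) (hxt : ∀ j, 0 < xt j) (hAxt : ∀ i, 0 < (A *ᵥ xt) i) :
    ∑ j, ((∑ i, A i j) * (xt j - x j) +
        xt j * (∑ i, y i * A i j / (A *ᵥ xt) i) * log (x j / xt j)) ≤
      poissonNLL A y xt - poissonNLL A y x := by
  have hlinear : ∑ i, ((A *ᵥ xt) i - (A *ᵥ x) i) = ∑ j, (∑ i, A i j) * (xt j - x j) := by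
    simpa only [Matrix.mulVec_sub, Pi.sub_apply] using Matrix.sum_mulVec_eq_sum_mul A (xt - x)
  have hlog : ∑ j, xt j * (∑ i, y i * A i j / (A *ᵥ xt) i) * log (x j / xt j) ≤
      ∑ i, y i * (log ((A *ᵥ x) i) - log ((A *ᵥ xt) i)) := by
    calc ∑ j, xt j * (∑ i, y i * A i j / (A *ᵥ xt) i) * log (x j / xt j)
        = ∑ i, y i / (A *ᵥ xt) i * ∑ j, A i j * xt j * log (x j / xt j) := by
          simp only [mul_sum, sum_mul]
          rw [sum_comm]
          refine sum_congr rfl fun j _ => sum_congr rfl fun i _ => ?_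
          ring
      _ ≤ ∑ i, y i / (A *ᵥ xt) i * ((A *ᵥ xt) i * log ((A *ᵥ x) i / (A *ᵥ xt) i)) :=
          sum_le_sum fun i _ => mul_le_mul_of_nonneg_left
            (Matrix.sum_mul_mul_log_div_le (hA i) hx hxt (hAxt i)) (div_nonneg (hy i) (hAxt i).le)
      _ = ∑ i, y i * (log ((A *ᵥ x) i) - log ((A *ᵥ xt) i)) := by
          refine sum_congr rfl fun i _ => ?_
          rw [log_div (hAx i).ne' (hAxt i).ne']
          field_simp [(hAxt i).ne']
  have hsplit : poissonNLL A y xt - poissonNLL A y x = ∑ i, ((A *ᵥ xt) i - (A *ᵥ x) i) +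
      ∑ i, y i * (log ((A *ᵥ x) i) - log ((A *ᵥ xt) i)) := by
    simp only [poissonNLL, ← sum_sub_distrib, ← sum_add_distrib]
    exact sum_congr rfl fun i _ => by ring
  rw [sum_add_distrib, hsplit, hlinear]
  exact add_le_add le_rfl hlog

/-- The Richardson–Lucy/MLEM multiplicative update
`x*_j = (xt_j / s_j) Σ_i y_i A_ij / (A xt)_i` does not increase the Poisson
negative log-likelihood: `f x* ≤ f xt`. -/
theorem mlem_update_decreases_poissonNLL {m n : ℕ} (A : Matrix (Fin m) (Fin n) ℝ)
    (y : Fin m → ℝ) (hA : ∀ i j, 0 ≤ A i j)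
    (hrow : ∀ i, ∃ j, 0 < A i j) (hy : ∀ i, 0 ≤ y i)
    (xt : Fin n → ℝ) (hxt : ∀ j, 0 < xt j) (hAxt : ∀ i, 0 < A.mulVec xt i)
    (hs : ∀ j, 0 < ∑ i, A i j)
    (hyA : ∀ j, ∃ i, 0 < y i * A i j)
    (xstar : Fin n → ℝ)
    (hxstar : ∀ j, xstar j = xt j / (∑ i, A i j) * ∑ i, y i * A i j / A.mulVec xt i) :
    poissonNLL A y xstar ≤ poissonNLL A y xt := by
  have hxstar_pos : ∀ j, 0 < xstar j := fun j => by
    obtain ⟨i, hi⟩ := hyA j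
    rw [hxstar]
    exact mul_pos (div_pos (hxt j) (hs j)) (sum_pos'
      (fun k _ => div_nonneg (mul_nonneg (hy k) (hA k j)) (hAxt k).le)
      ⟨i, mem_univ i, div_pos hi (hAxt i)⟩)
  have hAxstar : ∀ i, 0 < (A *ᵥ xstar) i := fun i =>
    Matrix.mulVec_pos (hA i) (hrow i) hxstar_pos
  refine sub_nonneg.1 ((sum_nonneg fun j _ => ?_).trans
    (sum_le_poissonNLL_sub hA hy hxstar_pos hAxstar hxt hAxt))
  have hgain : xt j * (∑ i, y i * A i j / (A *ᵥ xt) i) = (∑ i, A i j) * xstar j := by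
    rw [hxstar]
    field_simp [(hs j).ne']
  rw [hgain, mul_assoc, ← mul_add]
  exact mul_nonneg (hs j).le (by linarith [sub_le_mul_log_div (hxt j) (hxstar_pos j).le])
end

section
/- Let A be an m × n real matrix with A_{ij} ≥ 0 for all i, j, let y ∈ ℝ^m with y_i ≥ 0 for all i, and let x̃ ∈ ℝ^n with x̃_j > 0 for all j and (Ax̃)_i > 0 for all i; set α̃_{ij} = A_{ij} x̃_j / (Ax̃)_i, s_j = Σ_{i=1}^m A_{ij}, and c_j = Σ_{i=1}^m y_i · α̃_{ij}. Assume s_j > 0 and c_j > 0 for all j, and let τ > 0 and u ∈ ℝ^n. Define x̂ ∈ ℝ^n componentwise by x̂_k = (1/2)·[u_k − τ s_k + sqrt((u_k − τ s_k)² + 4τ c_k)]. Then x̂_k > 0 for all k, and x̂ is the unique global minimizer over the open positive orthant {x : x_j > 0 for all j} of Q(x) = F_EM(x, x̃) + (1/(2τ))‖x − u‖², where F_EM(x, x̃) = Σ_{i=1}^m [(Ax)_i − Σ_{j=1}^n y_i · α̃_{ij} · log(A_{ij} x_j / α̃_{ij})]: for every x in the open positive orthant with x ≠ x̂, Q(x̂)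 < Q(x). In other words, the proximal operator of τ F_EM(·, x̃) at u is given in closed form by x̂. -/
open scoped BigOperators

open Real

/-! `F_EM (·, xt)` is separable: up to a constant it is `Σ_j (s_j x_j − c_j log x_j)`, so its
proximal map is computed coordinatewise. In each coordinate, `x̂_k` is the positive root of the
optimality condition `t² − (u − τ s) t − τ c = 0`, and `log r ≤ r − 1` shows that this critical
point is the strict global minimiser on `(0, ∞)`. -/

lemma mul_log_mul_div_eq {a b x : ℝ} (hx : x ≠ 0) (hab : a = 0 → b = 0) :
    b * log (a * x / b) = b * log x + b * log (a / b) := by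
  rcases eq_or_ne b 0 with rfl | hb
  · simp
  have ha : a ≠ 0 := fun h => hb (hab h)
  rw [mul_div_right_comm, mul_comm, log_mul (div_ne_zero ha hb) hx]
  ring

lemma emSurrogate_eq_sum_sub {m n : ℕ} (A : Matrix (Fin m) (Fin n) ℝ) (y : Fin m → ℝ)
    (x xt : Fin n → ℝ) (hx : ∀ j, x j ≠ 0) :
    emSurrogate A y x xt =
      ∑ j, ((∑ i, A i j) * x j
          - (∑ i, y i * (A i j * xt j / A.mulVec xt i)) * log (x j))
        - ∑ i, ∑ j, y i * (A i j * xt j / A.mulVec xt i) *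
            log (A i j / (A i j * xt j / A.mulVec xt i)) := by
  have hlog : ∀ i j, y i * (A i j * xt j / A.mulVec xt i) *
      log (A i j * x j / (A i j * xt j / A.mulVec xt i))
      = y i * (A i j * xt j / A.mulVec xt i) * log (x j)
        + y i * (A i j * xt j / A.mulVec xt i) *
          log (A i j / (A i j * xt j / A.mulVec xt i)) := fun i j => by
    rw [mul_assoc, mul_assoc, mul_assoc, ← mul_add,
      mul_log_mul_div_eq (hx j) (fun h => by rw [h, zero_mul, zero_div])]
  have hAx : ∑ i, A.mulVec x i = ∑ j, (∑ i, A i j) * x j := by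
    simp only [Matrix.mulVec, dotProduct, Finset.sum_mul]
    exact Finset.sum_comm
  have hylog : ∑ i, ∑ j, y i * (A i j * xt j / A.mulVec xt i) * log (x j)
      = ∑ j, (∑ i, y i * (A i j * xt j / A.mulVec xt i)) * log (x j) := by
    simp only [Finset.sum_mul]
    exact Finset.sum_comm
  simp only [emSurrogate, hlog, Finset.sum_add_distrib, Finset.sum_sub_distrib, hAx, hylog]
  ring

lemma half_add_sqrt_sq_add_pos (b d : ℝ) (hd : 0 < d) : 0 < 1 / 2 * (b + √(b ^ 2 + 4 * d)) := by
  have : |b| < √(b ^ 2 + 4 * d) := by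
    rw [lt_sqrt (abs_nonneg b), sq_abs]
    linarith
  linarith [neg_abs_le b]

lemma half_add_sqrt_sq_add_sq_eq (b d : ℝ) (hd : 0 ≤ b ^ 2 + 4 * d) :
    (1 / 2 * (b + √(b ^ 2 + 4 * d))) ^ 2 = b * (1 / 2 * (b + √(b ^ 2 + 4 * d))) + d := by
  linear_combination (1 / 4) * sq_sqrt hd

lemma mul_sub_mul_log_add_sq_lt_of_sq_eq {s c τ u t₀ t : ℝ} (hτ : 0 < τ) (hc : 0 ≤ c)
    (ht₀ : 0 < t₀) (hroot : t₀ ^ 2 = (u - τ * s) * t₀ + τ * c) (ht : 0 < t) (hne : t ≠ t₀) :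
    s * t₀ - c * log t₀ + 1 / (2 * τ) * (t₀ - u) ^ 2
      < s * t - c * log t + 1 / (2 * τ) * (t - u) ^ 2 := by
  have hgap : s * t - c * log t + 1 / (2 * τ) * (t - u) ^ 2
      - (s * t₀ - c * log t₀ + 1 / (2 * τ) * (t₀ - u) ^ 2)
      = c * (t / t₀ - 1 - log (t / t₀)) + (t - t₀) ^ 2 / (2 * τ) := by
    -- `hroot` is the stationarity condition `s + (t₀ - u) / τ = c / t₀`
    rw [log_div ht.ne' ht₀.ne']
    field_simp
    linear_combination 2 * (t - t₀) * hroot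
  have hlog : 0 ≤ c * (t / t₀ - 1 - log (t / t₀)) :=
    mul_nonneg hc (by linarith [log_le_sub_one_of_pos (div_pos ht ht₀)])
  have hsq : 0 < (t - t₀) ^ 2 / (2 * τ) := by
    have := sub_ne_zero.mpr hne
    positivity
  linarith

theorem em_prox_closed_form_general {m n : ℕ} (A : Matrix (Fin m) (Fin n) ℝ)
    (y : Fin m → ℝ)
    (xt : Fin n → ℝ)
    (hc : ∀ j, 0 < ∑ i, y i * (A i j * xt j / A.mulVec xt i))
    (τ : ℝ) (hτ : 0 < τ) (u : Fin n → ℝ)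
    (xhat : Fin n → ℝ)
    (hxhat : ∀ k, xhat k =
      (1 / 2) * (u k - τ * (∑ i, A i k) +
        Real.sqrt ((u k - τ * (∑ i, A i k)) ^ 2 +
          4 * τ * ∑ i, y i * (A i k * xt k / A.mulVec xt i)))) :
    (∀ k, 0 < xhat k) ∧
    (∀ x : Fin n → ℝ, (∀ j, 0 < x j) → x ≠ xhat →
      emSurrogate A y xhat xt + (1 / (2 * τ)) * ∑ k, (xhat k - u k) ^ 2
        < emSurrogate A y x xt + (1 / (2 * τ)) * ∑ k, (x k - u k) ^ 2) := by
  have hτc : ∀ k, 0 < τ * ∑ i, y i * (A i k * xt k / A.mulVec xt i) :=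
    fun k => mul_pos hτ (hc k)
  have hpos : ∀ k, 0 < xhat k := fun k => by
    rw [hxhat k, mul_assoc 4]
    exact half_add_sqrt_sq_add_pos _ _ (hτc k)
  have hroot : ∀ k, xhat k ^ 2 = (u k - τ * (∑ i, A i k)) * xhat k
      + τ * ∑ i, y i * (A i k * xt k / A.mulVec xt i) := fun k => by
    rw [hxhat k, mul_assoc 4]
    exact half_add_sqrt_sq_add_sq_eq _ _ (by nlinarith [hτc k])
  refine ⟨hpos, fun x hx hne => ?_⟩
  set φ : Fin n → ℝ → ℝ := fun j t => (∑ i, A i j) * t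
    - (∑ i, y i * (A i j * xt j / A.mulVec xt i)) * log t + 1 / (2 * τ) * (t - u j) ^ 2
  have hcoord : ∀ j, x j ≠ xhat j → φ j (xhat j) < φ j (x j) := fun j hj =>
    mul_sub_mul_log_add_sq_lt_of_sq_eq hτ (hc j).le (hpos j) (hroot j) (hx j) hj
  obtain ⟨j₀, hj₀⟩ := Function.ne_iff.mp hne
  have hsum : ∑ j, φ j (xhat j) < ∑ j, φ j (x j) := by
    refine Finset.sum_lt_sum (fun j _ => ?_) ⟨j₀, Finset.mem_univ _, hcoord j₀ hj₀⟩
    rcases eq_or_ne (x j) (xhat j) with h | h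
    · rw [h]
    · exact (hcoord j h).le
  rw [emSurrogate_eq_sum_sub A y x xt fun j => (hx j).ne',
    emSurrogate_eq_sum_sub A y xhat xt fun j => (hpos j).ne', Finset.mul_sum, Finset.mul_sum]
  simp only [φ, Finset.sum_add_distrib, Finset.sum_sub_distrib] at hsum ⊢
  linarith

/-- Closed form of the proximal operator of `τ F_EM (·, xt)` at `u`: with
`s_j = Σ_i A_ij`, `c_j = Σ_i y_i α̃_ij` and
`x̂_k = (1/2)[u_k − τ s_k + √((u_k − τ s_k)² + 4τ c_k)]`, the point `x̂` has
positive entries and is the unique global minimizer over the open positive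
orthant of `Q x = F_EM (x, xt) + (1/(2τ)) ‖x − u‖²`. -/
theorem em_prox_closed_form {m n : ℕ} (A : Matrix (Fin m) (Fin n) ℝ)
    (y : Fin m → ℝ) (hA : ∀ i j, 0 ≤ A i j) (hy : ∀ i, 0 ≤ y i)
    (xt : Fin n → ℝ) (hxt : ∀ j, 0 < xt j) (hAxt : ∀ i, 0 < A.mulVec xt i)
    (hs : ∀ j, 0 < ∑ i, A i j)
    (hc : ∀ j, 0 < ∑ i, y i * (A i j * xt j / A.mulVec xt i))
    (τ : ℝ) (hτ : 0 < τ) (u : Fin n → ℝ)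
    (xhat : Fin n → ℝ)
    (hxhat : ∀ k, xhat k =
      (1 / 2) * (u k - τ * (∑ i, A i k) +
        Real.sqrt ((u k - τ * (∑ i, A i k)) ^ 2 +
          4 * τ * ∑ i, y i * (A i k * xt k / A.mulVec xt i)))) :
    (∀ k, 0 < xhat k) ∧
    (∀ x : Fin n → ℝ, (∀ j, 0 < x j) → x ≠ xhat →
      emSurrogate A y xhat xt + (1 / (2 * τ)) * ∑ k, (xhat k - u k) ^ 2
        < emSurrogate A y x xt + (1 / (2 * τ)) * ∑ k, (x k - u k) ^ 2) :=
  em_prox_closed_form_general A y xt hc τ hτ u xhat hxhat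
end
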